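/- arXiv:2003.02829 — 3 statements merged into one kernel-verified Lean document; each statement's English description precedes it below -/
import Mathlib

section
/- Let W ∈ ℝ^{n×n}, E₁ ∈ ℝ^{n×k}, H₁ ∈ ℝ^{k×k}, ε ∈ ℝ, and suppose all column sums of H₁ are equal to a common value σ. Let c₁, c₂ ∈ ℝ and set H₂ = H₁ + c₁·J_{k×k} and E₂ = E₁ + c₂·J_{n×k} (adding a constant to every entry). Define the LinBP iterates B_a^{(0)} = E_a and B_a^{(r+1)} = E_a + ε·W·B_a^{(r)}·H_a for a ∈ {1,2}. Then for every iteration r ≥ 0 the difference matrix B₂^{(r)} − B₁^{(r)} has constant rows: for every node i and all classes j, j', (B₂^{(r)} − B₁^{(r)})_{ij} = (B₂^{(r)} − B₁^{(r)})_{ij'}. -/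
/-!
The difference `D r = B₂ r - B₁ r` obeys
`D (r+1) = c₂ J + ε (W D r H₁ + c₁ W B₂ r J)`.
Matrices with constant rows are closed under sums, scalings, multiplication on the left by
anything, and multiplication on the right by a matrix with equal column sums; `J` and `X J`
have constant rows. Induction on `r` finishes.
-/

open Matrix Finset

namespace Matrix

variable {m n l α : Type*}

def HasConstantRows (M : Matrix m n α) : Prop :=
  ∀ i j j', M i j = M i j'

theorem hasConstantRows_of_const (c : α) : HasConstantRows (of fun (_ : m) (_ : n) => c) :=
  fun _ _ _ => rfl

namespace HasConstantRows

theorem add [Add α] {M N : Matrix m n α} (hM : HasConstantRows M) (hN : HasConstantRows N) :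
    HasConstantRows (M + N) :=
  fun i j j' => by simp only [add_apply, hM i j j', hN i j j']

theorem smul {R : Type*} [SMul R α] {M : Matrix m n α} (hM : HasConstantRows M) (c : R) :
    HasConstantRows (c • M) :=
  fun i j j' => by simp only [smul_apply, hM i j j']

theorem mul_left [Fintype l] [NonUnitalNonAssocSemiring α] {M : Matrix l n α}
    (hM : HasConstantRows M) (A : Matrix m l α) : HasConstantRows (A * M) :=
  fun i j j' => by simp only [mul_apply, hM _ j j']

theorem mul_of_colSum_eq [Fintype n] [NonUnitalNonAssocSemiring α] {M : Matrix m n α}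
    (hM : HasConstantRows M) {H : Matrix n l α} {σ : α} (hH : ∀ j, ∑ i, H i j = σ) :
    HasConstantRows (M * H) := by
  intro i j j'
  rcases isEmpty_or_nonempty n with _ | ⟨⟨b₀⟩⟩
  · simp only [mul_apply, Finset.univ_eq_empty, Finset.sum_empty]
  · have row_mul (j'' : l) : (M * H) i j'' = M i b₀ * σ := by
      simp only [mul_apply, hM i _ b₀, ← Finset.mul_sum, hH]
    rw [row_mul, row_mul]

end HasConstantRows

end Matrix

/-- **Centering in LinBP is unnecessary (core invariant).** If `H₂ = H₁ + c₁ J` and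
`E₂ = E₁ + c₂ J`, where `J` is the all-ones matrix, and all column sums of `H₁`
are equal, then at every iteration `r` of LinBP the difference `B₂ r - B₁ r`
has constant rows. -/
theorem stmt_2 {n k : ℕ}
    (W : Matrix (Fin n) (Fin n) ℝ)
    (E₁ E₂ : Matrix (Fin n) (Fin k) ℝ)
    (H₁ H₂ : Matrix (Fin k) (Fin k) ℝ)
    (ε : ℝ) (σ : ℝ)
    (hσ : ∀ j, ∑ i, H₁ i j = σ)
    (c₁ c₂ : ℝ)
    (hH₂ : H₂ = H₁ + c₁ • (Matrix.of fun _ _ => (1 : ℝ) : Matrix (Fin k) (Fin k) ℝ))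
    (hE₂ : E₂ = E₁ + c₂ • (Matrix.of fun _ _ => (1 : ℝ) : Matrix (Fin n) (Fin k) ℝ))
    (B₁ B₂ : ℕ → Matrix (Fin n) (Fin k) ℝ)
    (hB₁0 : B₁ 0 = E₁) (hB₂0 : B₂ 0 = E₂)
    (hB₁ : ∀ r, B₁ (r + 1) = E₁ + ε • (W * B₁ r * H₁))
    (hB₂ : ∀ r, B₂ (r + 1) = E₂ + ε • (W * B₂ r * H₂)) :
    ∀ (r : ℕ) (i : Fin n) (j j' : Fin k),
      (B₂ r - B₁ r) i j = (B₂ r - B₁ r) i j' := by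
  set J : Matrix (Fin k) (Fin k) ℝ := of fun _ _ => 1
  have hc₂J : HasConstantRows (c₂ • (of fun _ _ => 1 : Matrix (Fin n) (Fin k) ℝ)) :=
    (hasConstantRows_of_const 1).smul c₂
  have step (r : ℕ) : B₂ (r + 1) - B₁ (r + 1) =
      c₂ • (of fun _ _ => 1) + ε • (W * (B₂ r - B₁ r) * H₁ + c₁ • (W * B₂ r * J)) := by
    rw [hB₁, hB₂, hE₂, hH₂]
    simp only [Matrix.mul_add, Matrix.mul_smul, Matrix.mul_sub, Matrix.sub_mul]
    module
  show ∀ r, HasConstantRows (B₂ r - B₁ r)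
  intro r
  induction r with
  | zero => simpa [hB₁0, hB₂0, hE₂] using hc₂J
  | succ r ih =>
    rw [step]
    exact hc₂J.add (((ih.mul_left W).mul_of_colSum_eq hσ).add
      (((hasConstantRows_of_const 1).mul_left _).smul c₁) |>.smul ε)
end

section
/- Let W ∈ ℝ^{n×n}, E₁ ∈ ℝ^{n×k}, H₁ ∈ ℝ^{k×k}, ε ∈ ℝ, and suppose all column sums of H₁ are equal to a common value σ. Let c₁, c₂ ∈ ℝ and set H₂ = H₁ + c₁·J_{k×k} and E₂ = E₁ + c₂·J_{n×k}. Define the LinBP iterates B_a^{(0)} = E_a and B_a^{(r+1)} = E_a + ε·W·B_a^{(r)}·H_a for a ∈ {1,2}. Then for every r ≥ 0, every node i, and all classes j, j', one has B₂^{(r)}_{ij} ≥ B₂^{(r)}_{ij'} if and only if B₁^{(r)}_{ij} ≥ B₁^{(r)}_{ij'}; in particular, assigning each node the class of maximal belief yields identical labels for the two runs. -/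
/-!
Shifting `E` by `c₂ J` and `H` by `c₁ J` only ever adds to the beliefs a matrix `d 1ᵀ` whose
rows are constant: `W (d 1ᵀ) = (W d) 1ᵀ`, `(d 1ᵀ) H₁ = σ d 1ᵀ` because the columns of `H₁` all
sum to `σ`, and `M (c₁ J) = c₁ (M 1) 1ᵀ`. Adding a constant to a row does not change the order
of its entries.
-/

open Matrix Finset

namespace Matrix

variable (m ι R : Type*) [CommRing R]

def rowConstant : Submodule R (Matrix m ι R) where
  carrier := Set.range (replicateCol ι)
  add_mem' := by
    rintro _ _ ⟨u, rfl⟩ ⟨v, rfl⟩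
    exact ⟨u + v, replicateCol_add u v⟩
  zero_mem' := ⟨0, replicateCol_zero⟩
  smul_mem' := by
    rintro c _ ⟨v, rfl⟩
    exact ⟨c • v, replicateCol_smul c v⟩

variable {m ι R}

theorem replicateCol_mem_rowConstant (v : m → R) : replicateCol ι v ∈ rowConstant m ι R :=
  ⟨v, rfl⟩

theorem of_one_mem_rowConstant : (of fun _ _ => (1 : R) : Matrix m ι R) ∈ rowConstant m ι R :=
  replicateCol_mem_rowConstant 1

theorem mul_mem_rowConstant {l : Type*} [Fintype m] (W : Matrix l m R) {X : Matrix m ι R}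
    (hX : X ∈ rowConstant m ι R) : W * X ∈ rowConstant l ι R := by
  obtain ⟨v, rfl⟩ := hX
  exact ⟨W *ᵥ v, replicateCol_mulVec W v⟩

theorem mul_of_one_mem_rowConstant {κ : Type*} [Fintype ι] (M : Matrix m ι R) :
    M * (of fun _ _ => (1 : R) : Matrix ι κ R) ∈ rowConstant m κ R :=
  mul_mem_rowConstant M of_one_mem_rowConstant

theorem mem_rowConstant_mul_of_sum_col_eq {κ : Type*} [Fintype ι] {X : Matrix m ι R}
    (hX : X ∈ rowConstant m ι R) {H : Matrix ι κ R} {σ : R} (hσ : ∀ j, ∑ i, H i j = σ) :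
    X * H ∈ rowConstant m κ R := by
  obtain ⟨v, rfl⟩ := hX
  refine ⟨σ • v, ?_⟩
  ext i j
  simp only [replicateCol_apply, mul_apply, Pi.smul_apply, smul_eq_mul, ← mul_sum, hσ]
  exact mul_comm _ _

theorem add_apply_le_add_apply_iff [PartialOrder R] [IsOrderedAddMonoid R] (B : Matrix m ι R)
    {D : Matrix m ι R} (hD : D ∈ rowConstant m ι R) (i : m) (j j' : ι) :
    (B + D) i j ≤ (B + D) i j' ↔ B i j ≤ B i j' := by
  obtain ⟨v, rfl⟩ := hD
  simp [replicateCol_apply]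

end Matrix

theorem linBP_sub_mem_rowConstant {m ι R : Type*} [Fintype m] [Fintype ι] [CommRing R]
    (W : Matrix m m R) (E₁ E₂ : Matrix m ι R) (H₁ H₂ : Matrix ι ι R) (ε σ : R)
    (hσ : ∀ j, ∑ i, H₁ i j = σ) (c₁ c₂ : R)
    (hH₂ : H₂ = H₁ + c₁ • (of fun _ _ => (1 : R) : Matrix ι ι R))
    (hE₂ : E₂ = E₁ + c₂ • (of fun _ _ => (1 : R) : Matrix m ι R))
    (B₁ B₂ : ℕ → Matrix m ι R) (hB₁0 : B₁ 0 = E₁) (hB₂0 : B₂ 0 = E₂)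
    (hB₁ : ∀ r, B₁ (r + 1) = E₁ + ε • (W * B₁ r * H₁))
    (hB₂ : ∀ r, B₂ (r + 1) = E₂ + ε • (W * B₂ r * H₂)) (r : ℕ) :
    B₂ r - B₁ r ∈ rowConstant m ι R := by
  have hJ : c₂ • (of fun _ _ => (1 : R) : Matrix m ι R) ∈ rowConstant m ι R :=
    Submodule.smul_mem _ _ of_one_mem_rowConstant
  induction r with
  | zero => simpa [hB₁0, hB₂0, hE₂] using hJ
  | succ r ih =>
    have hstep : B₂ (r + 1) - B₁ (r + 1) = c₂ • (of fun _ _ => (1 : R) : Matrix m ι R)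
        + ε • (W * (B₂ r - B₁ r) * H₁
          + c₁ • (W * B₂ r * (of fun _ _ => (1 : R) : Matrix ι ι R))) := by
      rw [hB₁, hB₂, hE₂, hH₂]
      simp only [Matrix.mul_add, Matrix.mul_sub, Matrix.sub_mul, Matrix.mul_smul, smul_add,
        smul_sub]
      module
    rw [hstep]
    refine Submodule.add_mem _ hJ (Submodule.smul_mem _ _ (Submodule.add_mem _ ?_ ?_))
    · exact mem_rowConstant_mul_of_sum_col_eq (mul_mem_rowConstant W ih) hσ
    · exact Submodule.smul_mem _ _ (mul_of_one_mem_rowConstant _)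

/-- **Centering in LinBP is unnecessary.** If `H₂ = H₁ + c₁ J` and `E₂ = E₁ + c₂ J`,
where `J` is the all-ones matrix, and all column sums of `H₁` are equal, then at
every iteration `r` of LinBP the relative order of beliefs within each row is
identical for the two runs; in particular the max-belief labeling is identical. -/
theorem stmt_3 {n k : ℕ}
    (W : Matrix (Fin n) (Fin n) ℝ)
    (E₁ E₂ : Matrix (Fin n) (Fin k) ℝ)
    (H₁ H₂ : Matrix (Fin k) (Fin k) ℝ)
    (ε : ℝ) (σ : ℝ)
    (hσ : ∀ j, ∑ i, H₁ i j = σ)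
    (c₁ c₂ : ℝ)
    (hH₂ : H₂ = H₁ + c₁ • (Matrix.of fun _ _ => (1 : ℝ) : Matrix (Fin k) (Fin k) ℝ))
    (hE₂ : E₂ = E₁ + c₂ • (Matrix.of fun _ _ => (1 : ℝ) : Matrix (Fin n) (Fin k) ℝ))
    (B₁ B₂ : ℕ → Matrix (Fin n) (Fin k) ℝ)
    (hB₁0 : B₁ 0 = E₁) (hB₂0 : B₂ 0 = E₂)
    (hB₁ : ∀ r, B₁ (r + 1) = E₁ + ε • (W * B₁ r * H₁))
    (hB₂ : ∀ r, B₂ (r + 1) = E₂ + ε • (W * B₂ r * H₂)) :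
    ∀ (r : ℕ) (i : Fin n) (j j' : Fin k),
      B₂ r i j ≥ B₂ r i j' ↔ B₁ r i j ≥ B₁ r i j' := by
  intro r i j j'
  have hD :=
    linBP_sub_mem_rowConstant W E₁ E₂ H₁ H₂ ε σ hσ c₁ c₂ hH₂ hE₂ B₁ B₂ hB₁0 hB₂0 hB₁ hB₂ r
  rw [ge_iff_le, ge_iff_le, ← add_sub_cancel (B₁ r) (B₂ r)]
  exact add_apply_le_add_apply_iff (B₁ r) hD i j' j
end

section
/- Let k ≥ 1, L ≥ 1, let H, S, and Z₁, …, Z_L be symmetric k×k real matrices, and let w₁, …, w_L ∈ ℝ. Define f : ℝ → ℝ by f(t) = Σ_{ℓ=1}^{L} w_ℓ · ‖(H + t·S)^ℓ − Z_ℓ‖_F². Then f is differentiable at t = 0 with f'(0) = Σ_{ℓ=1}^{L} w_ℓ · trace(G_ℓ · S), where G_ℓ = 2ℓ·H^{2ℓ−1} − 2·Σ_{r=0}^{ℓ−1} H^r · Z_ℓ · H^{ℓ−1−r}. -/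
/-!
The map `t ↦ (H + t • S) ^ ℓ` has derivative `∑ r, H ^ (ℓ - 1 - r) * S * H ^ r` at `0` (product
rule in the noncommutative algebra of matrices), and `M ↦ ‖M‖_F²` has derivative
`D ↦ 2 * trace (D * Mᵀ)`. For `M = H ^ ℓ - Z ℓ` symmetric, cyclicity of the trace moves `S` to the
right, giving `trace ((∑ r, H ^ r * M * H ^ (ℓ - 1 - r)) * S)`, and each term
`H ^ r * H ^ ℓ * H ^ (ℓ - 1 - r)` collapses to `H ^ (2 * ℓ - 1)`.
-/

open Matrix Finset

theorem hasDerivAt_add_smul_pow {𝔸 : Type*} [NormedRing 𝔸] [NormedAlgebra ℝ 𝔸] (a b : 𝔸) (n : ℕ) :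
    HasDerivAt (fun t : ℝ => (a + t • b) ^ n)
      (∑ i ∈ range n, a ^ (n - 1 - i) * b * a ^ i) 0 := by
  have hline : HasDerivAt (fun t : ℝ => a + t • b) b 0 := by
    simpa using ((hasDerivAt_id (0 : ℝ)).smul_const b).const_add a
  simpa [Nat.pred_eq_sub_one] using hline.fun_pow' n

theorem sum_pow_mul_sub_mul_pow {R : Type*} [Ring R] (a z : R) (n : ℕ) :
    ∑ i ∈ range n, a ^ i * (a ^ n - z) * a ^ (n - 1 - i)
      = n • a ^ (2 * n - 1) - ∑ i ∈ range n, a ^ i * z * a ^ (n - 1 - i) := by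
  rw [show n • a ^ (2 * n - 1) = ∑ _i ∈ range n, a ^ (2 * n - 1) by simp, ← sum_sub_distrib]
  refine sum_congr rfl fun i hi => ?_
  rw [mul_sub, sub_mul, ← pow_add, ← pow_add]
  congr 2
  have := mem_range.mp hi
  omega

theorem trace_sum_pow_mul_pow_mul {n R : Type*} [Fintype n] [DecidableEq n] [CommRing R]
    (A B C : Matrix n n R) (k : ℕ) :
    trace ((∑ i ∈ range k, A ^ (k - 1 - i) * B * A ^ i) * C)
      = trace ((∑ i ∈ range k, A ^ i * C * A ^ (k - 1 - i)) * B) := by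
  simp only [sum_mul, trace_sum]
  refine sum_congr rfl fun i _ => ?_
  rw [trace_mul_cycle, ← Matrix.mul_assoc, trace_mul_cycle, ← Matrix.mul_assoc]

section MatrixCalculus

-- Any norm would do: on a finite-dimensional space all norms give the same derivatives.
attribute [local instance] Matrix.linftyOpNormedAddCommGroup Matrix.linftyOpNormedSpace
  Matrix.linftyOpNormedRing Matrix.linftyOpNormedAlgebra

variable {m n : Type*} [Fintype m] [Fintype n]

theorem HasDerivAt.matrix_apply {A : ℝ → Matrix m n ℝ} {A' : Matrix m n ℝ} {x : ℝ}
    (hA : HasDerivAt A A' x) (i : m) (j : n) :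
    HasDerivAt (fun t => A t i j) (A' i j) x :=
  (LinearMap.toContinuousLinearMap (entryLinearMap ℝ ℝ i j)).hasFDerivAt.comp_hasDerivAt x hA

theorem HasDerivAt.sum_sq_matrix_apply {A : ℝ → Matrix m n ℝ} {A' : Matrix m n ℝ} {x : ℝ}
    (hA : HasDerivAt A A' x) :
    HasDerivAt (fun t => ∑ i, ∑ j, (A t i j) ^ 2) (2 * trace (A' * (A x)ᵀ)) x := by
  have h := HasDerivAt.fun_sum (u := univ) fun i _ => HasDerivAt.fun_sum (u := univ) fun j _ =>
    (hA.matrix_apply i j).fun_pow 2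
  refine h.congr_deriv ?_
  simp only [← sum_hadamard_eq, hadamard_apply, mul_sum]
  exact sum_congr rfl fun i _ => sum_congr rfl fun j _ => by ring

theorem hasDerivAt_sum_sq_add_smul_pow_sub [DecidableEq n] {H Z : Matrix n n ℝ}
    (hH : H.IsSymm) (hZ : Z.IsSymm) (S : Matrix n n ℝ) (ℓ : ℕ) :
    HasDerivAt (fun t : ℝ => ∑ i, ∑ j, (((H + t • S) ^ ℓ - Z) i j) ^ 2)
      (trace (((2 * ℓ : ℝ) • H ^ (2 * ℓ - 1) -
        (2 : ℝ) • ∑ r ∈ range ℓ, H ^ r * Z * H ^ (ℓ - 1 - r)) * S)) 0 := by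
  have hM : ((H + (0 : ℝ) • S) ^ ℓ - Z)ᵀ = H ^ ℓ - Z := by
    rw [zero_smul, add_zero]; exact (hH.pow ℓ).sub hZ
  refine ((hasDerivAt_add_smul_pow H S ℓ).sub_const Z).sum_sq_matrix_apply.congr_deriv ?_
  rw [hM, trace_sum_pow_mul_pow_mul, sum_pow_mul_sub_mul_pow, ← smul_smul,
    Nat.cast_smul_eq_nsmul, ← smul_sub, smul_mul_assoc, trace_smul, smul_eq_mul]

end MatrixCalculus

theorem stmt_10_general {k : ℕ} (L : ℕ)
    (H S : Matrix (Fin k) (Fin k) ℝ)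
    (Z : ℕ → Matrix (Fin k) (Fin k) ℝ)
    (w : ℕ → ℝ)
    (hH : H.IsSymm) (hZ : ∀ ℓ, (Z ℓ).IsSymm)
    (f : ℝ → ℝ)
    (hf : ∀ t, f t = ∑ ℓ ∈ Finset.Icc 1 L,
      w ℓ * ∑ i, ∑ j, (((H + t • S) ^ ℓ - Z ℓ) i j) ^ 2)
    (G : ℕ → Matrix (Fin k) (Fin k) ℝ)
    (hG : ∀ ℓ, G ℓ = (2 * ℓ : ℝ) • H ^ (2 * ℓ - 1) -
      (2 : ℝ) • ∑ r ∈ Finset.range ℓ, H ^ r * Z ℓ * H ^ (ℓ - 1 - r)) :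
    HasDerivAt f (∑ ℓ ∈ Finset.Icc 1 L, w ℓ * Matrix.trace (G ℓ * S)) 0 := by
  rw [funext hf]
  simp only [hG]
  exact HasDerivAt.fun_sum fun ℓ _ =>
    (hasDerivAt_sum_sq_add_smul_pow_sub hH (hZ ℓ) S ℓ).const_mul (w ℓ)

/-- **Gradient of the DCE energy (matrix part).** For symmetric `H`, `S`, `Z ℓ`
and weights `w ℓ`, the function
`f t = Σ_{ℓ=1}^{L} w ℓ · ‖(H + t·S)^ℓ − Z ℓ‖_F²`
is differentiable at `t = 0` with derivative
`Σ_{ℓ=1}^{L} w ℓ · trace (G ℓ · S)` where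
`G ℓ = 2ℓ·H^(2ℓ−1) − 2·Σ_{r=0}^{ℓ−1} H^r · Z ℓ · H^(ℓ−1−r)`. -/
theorem stmt_10 {k : ℕ} (hk : 1 ≤ k) (L : ℕ) (hL : 1 ≤ L)
    (H S : Matrix (Fin k) (Fin k) ℝ)
    (Z : ℕ → Matrix (Fin k) (Fin k) ℝ)
    (w : ℕ → ℝ)
    (hH : H.IsSymm) (hS : S.IsSymm) (hZ : ∀ ℓ, (Z ℓ).IsSymm)
    (f : ℝ → ℝ)
    (hf : ∀ t, f t = ∑ ℓ ∈ Finset.Icc 1 L,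
      w ℓ * ∑ i, ∑ j, (((H + t • S) ^ ℓ - Z ℓ) i j) ^ 2)
    (G : ℕ → Matrix (Fin k) (Fin k) ℝ)
    (hG : ∀ ℓ, G ℓ = (2 * ℓ : ℝ) • H ^ (2 * ℓ - 1) -
      (2 : ℝ) • ∑ r ∈ Finset.range ℓ, H ^ r * Z ℓ * H ^ (ℓ - 1 - r)) :
    HasDerivAt f (∑ ℓ ∈ Finset.Icc 1 L, w ℓ * Matrix.trace (G ℓ * S)) 0 :=
  stmt_10_general L H S Z w hH hZ f hf G hG
end
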